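/- arXiv:1612.06757 — 4 statements merged into one kernel-verified Lean document; each statement's English description precedes it below -/
import Mathlib

section
/- Let F = (h, w) : Ω → ℂ × ℝ ≅ 𝕃³ be a generalised maximal surface, i.e., h and w are harmonic with h_z · conj(h_z̄) = (w_z)², and suppose F is spacelike (both F_x and F_y have nonnegative Lorentzian square norm). Then at any point p ∈ Ω, F fails to be an immersion if and only if |h_z(p)| = |h_z̄(p)|. -/
noncomputable section

open Complex

/-- Partial derivative in the `x` direction. -/
def px (f : ℂ → ℂ) (p : ℂ) : ℂ := fderiv ℝ f p 1
/-- Partial derivative in the `y` direction. -/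
def py (f : ℂ → ℂ) (p : ℂ) : ℂ := fderiv ℝ f p Complex.I
/-- Wirtinger derivative `f_z = (f_x - i f_y)/2`. -/
def wz (f : ℂ → ℂ) (p : ℂ) : ℂ := (px f p - Complex.I * py f p) / 2
/-- Wirtinger derivative `f_z̄ = (f_x + i f_y)/2`. -/
def wzbar (f : ℂ → ℂ) (p : ℂ) : ℂ := (px f p + Complex.I * py f p) / 2
/-- `x`-partial of a real valued function. -/
def rx (f : ℂ → ℝ) (p : ℂ) : ℝ := fderiv ℝ f p 1
/-- `y`-partial of a real valued function. -/
def ry (f : ℂ → ℝ) (p : ℂ) : ℝ := fderiv ℝ f p Complex.I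
/-- Wirtinger derivative of a real valued function, `w_z = (w_x - i w_y)/2`. -/
def rz (f : ℂ → ℝ) (p : ℂ) : ℂ := ((rx f p : ℂ) - Complex.I * (ry f p : ℂ)) / 2

/-- Real-coordinate core of the singularity criterion. -/
lemma core_singular (a1 a2 b1 b2 s t : ℝ)
    (hre : a1^2 + a2^2 - b1^2 - b2^2 = s^2 - t^2)
    (hmix : a1*b1 + a2*b2 = s*t)
    (sp1 : s^2 ≤ a1^2 + a2^2) (sp2 : t^2 ≤ b1^2 + b2^2) :
    (∃ l m : ℝ, ¬(l = 0 ∧ m = 0) ∧ (l*a1 + m*b1 = 0 ∧ l*a2 + m*b2 = 0) ∧ l*s + m*t = 0) ↔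
      a2*b1 - a1*b2 = 0 := by
  constructor
  · rintro ⟨l, m, hnt, ⟨h1, h2⟩, h3⟩
    have hE1 : l * (a1^2 + a2^2 - s^2) = 0 := by
      linear_combination a1*h1 + a2*h2 - s*h3 - m*hmix
    have hE2 : m * (a1^2 + a2^2 - s^2) = 0 := by
      linear_combination b1*h1 + b2*h2 - t*h3 - l*hmix + m*hre
    have hE : a1^2 + a2^2 - s^2 = 0 := by
      rcases mul_eq_zero.mp hE1 with hl | hE
      · rcases mul_eq_zero.mp hE2 with hm | hE
        · exact absurd ⟨hl, hm⟩ hnt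
        · exact hE
      · exact hE
    have hG : b1^2 + b2^2 - t^2 = 0 := by linarith
    have hsq : (a2*b1 - a1*b2)^2 = 0 := by
      linear_combination (b1^2+b2^2)*hE + s^2*hG - (a1*b1+a2*b2+s*t)*hmix
    exact pow_eq_zero_iff two_ne_zero |>.mp hsq
  · intro him
    have hXY : (a1^2+a2^2) * (b1^2+b2^2) = s^2 * t^2 := by
      linear_combination (a1*b1+a2*b2+s*t)*hmix + (a2*b1-a1*b2)*him
    have hu : 0 ≤ a1^2 + a2^2 - s^2 := by linarith
    have hv : 0 ≤ b1^2 + b2^2 - t^2 := by linarith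
    have hsum0 : s^2*(b1^2+b2^2-t^2) + t^2*(a1^2+a2^2-s^2)
        + (a1^2+a2^2-s^2)*(b1^2+b2^2-t^2) = 0 := by linear_combination hXY
    have huv : (a1^2+a2^2-s^2)*(b1^2+b2^2-t^2) = 0 := by
      nlinarith [mul_nonneg (sq_nonneg s) hv, mul_nonneg (sq_nonneg t) hu,
        mul_nonneg hu hv]
    have huu : (a1^2+a2^2-s^2)^2 = 0 := by
      linear_combination huv + (a1^2+a2^2-s^2)*hre
    have hE : a1^2+a2^2-s^2 = 0 := pow_eq_zero_iff two_ne_zero |>.mp huu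
    have hG : b1^2+b2^2-t^2 = 0 := by linarith
    by_cases hst : s = 0 ∧ t = 0
    · have ha1 : a1 = 0 := by nlinarith [hE, hst.1, sq_nonneg a2, sq_nonneg a1]
      have ha2 : a2 = 0 := by nlinarith [hE, hst.1, sq_nonneg a2, sq_nonneg a1]
      exact ⟨1, 0, by simp, ⟨by simp [ha1], by simp [ha2]⟩, by simp [hst.1]⟩
    · have key : (-t*a1 + s*b1)^2 + (-t*a2 + s*b2)^2 = 0 := by
        linear_combination t^2*hE + s^2*hG - 2*s*t*hmix
      have k1 : -t*a1 + s*b1 = 0 := by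
        have h0 : (-t*a1 + s*b1)^2 = 0 := by
          linarith [sq_nonneg (-t*a2 + s*b2), sq_nonneg (-t*a1 + s*b1), key]
        exact pow_eq_zero_iff two_ne_zero |>.mp h0
      have k2 : -t*a2 + s*b2 = 0 := by
        have h0 : (-t*a2 + s*b2)^2 = 0 := by
          linarith [sq_nonneg (-t*a2 + s*b2), sq_nonneg (-t*a1 + s*b1), key]
        exact pow_eq_zero_iff two_ne_zero |>.mp h0
      refine ⟨-t, s, ?_, ⟨k1, k2⟩, by ring⟩
      rintro ⟨ht, hs⟩
      exact hst ⟨hs, by linarith [neg_eq_zero.mp ht]⟩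

/-- Complex-coordinate form of the singularity criterion. -/
lemma key_alg (A B : ℂ) (s t : ℝ)
    (hconf : (A - I*B)/2 * (starRingEnd ℂ) ((A + I*B)/2) - (((s:ℂ) - I*(t:ℂ))/2)^2 = 0)
    (sp1 : 0 ≤ (A * (starRingEnd ℂ) A).re - s^2) (sp2 : 0 ≤ (B * (starRingEnd ℂ) B).re - t^2) :
    (∃ l m : ℝ, ¬(l = 0 ∧ m = 0) ∧ l • A + m • B = 0 ∧ l*s + m*t = 0) ↔
      ‖(A - I*B)/2‖ = ‖(A + I*B)/2‖ := by
  obtain ⟨hr, hi⟩ := Complex.ext_iff.mp hconf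
  simp [Complex.div_re, Complex.div_im, Complex.mul_re, Complex.mul_im, Complex.normSq,
    pow_two] at hr hi
  have hre : A.re^2 + A.im^2 - B.re^2 - B.im^2 = s^2 - t^2 := by linear_combination 4*hr
  have hmix : A.re*B.re + A.im*B.im = s*t := by linear_combination (-2)*hi
  have hsp1 : s^2 ≤ A.re^2 + A.im^2 := by
    simp [Complex.mul_conj, Complex.normSq_apply, pow_two] at sp1; nlinarith [sp1]
  have hsp2 : t^2 ≤ B.re^2 + B.im^2 := by
    simp [Complex.mul_conj, Complex.normSq_apply, pow_two] at sp2; nlinarith [sp2]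
  have hiff := core_singular A.re A.im B.re B.im s t hre hmix hsp1 hsp2
  have hdiff : normSq ((A-I*B)/2) - normSq ((A+I*B)/2) = -(A.im*B.re - A.re*B.im) := by
    simp [Complex.normSq_apply, Complex.div_re, Complex.div_im, Complex.mul_re, Complex.mul_im]
    ring
  have habs : ‖(A - I*B)/2‖ = ‖(A + I*B)/2‖ ↔
      A.im*B.re - A.re*B.im = 0 := by
    rw [Complex.norm_def, Complex.norm_def,
      Real.sqrt_inj (normSq_nonneg _) (normSq_nonneg _)]
    constructor <;> intro hx <;> linarith
  rw [habs, ← hiff]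
  constructor
  · rintro ⟨l, m, hnt, hc, hst⟩
    refine ⟨l, m, hnt, ⟨?_, ?_⟩, hst⟩
    · have := congrArg Complex.re hc
      simpa [Complex.smul_re] using this
    · have := congrArg Complex.im hc
      simpa [Complex.smul_im] using this
  · rintro ⟨l, m, hnt, ⟨hc1, hc2⟩, hst⟩
    exact ⟨l, m, hnt, by simp [Complex.ext_iff, Complex.smul_re, Complex.smul_im, hc1, hc2], hst⟩

/-- Non-injectivity of a continuous linear map out of `ℂ` in terms of the images of `1`, `I`. -/
lemma not_injective_iff_comb {E : Type*} [NormedAddCommGroup E] [NormedSpace ℝ E]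
    (L : ℂ →L[ℝ] E) :
    ¬ Function.Injective L ↔
      ∃ l m : ℝ, ¬(l = 0 ∧ m = 0) ∧ l • L 1 + m • L Complex.I = 0 := by
  have hz' : ∀ z : ℂ, z.re • (1:ℂ) + z.im • Complex.I = z := by
    intro z
    simpa [Complex.real_smul] using Complex.re_add_im z
  constructor
  · intro hni
    have hexists : ∃ z : ℂ, z ≠ 0 ∧ L z = 0 := by
      by_contra hcon
      push_neg at hcon
      apply hni
      intro x y hxy
      have hs : L (x - y) = 0 := by rw [map_sub, hxy, sub_self]
      by_contra hne
      exact hcon (x - y) (sub_ne_zero.mpr hne) hs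
    obtain ⟨z, hz, hLz⟩ := hexists
    refine ⟨z.re, z.im, ?_, ?_⟩
    · rintro ⟨h1, h2⟩
      exact hz (Complex.ext h1 h2)
    · rw [← hz' z, map_add, map_smul, map_smul] at hLz
      exact hLz
  · rintro ⟨l, m, hnt, hsum⟩ hinj
    have hv : L (l • (1:ℂ) + m • Complex.I) = 0 := by
      rw [map_add, map_smul, map_smul]; exact hsum
    have h0 : l • (1:ℂ) + m • Complex.I = 0 := hinj (by rw [hv, map_zero])
    apply hnt
    have hre := congrArg Complex.re h0
    have him := congrArg Complex.im h0
    simp [Complex.smul_re, Complex.smul_im] at hre him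
    exact ⟨hre, him⟩

/-- a spacelike generalised maximal surface `F = (h,w)` fails to be an
immersion at `p` iff `|h_z(p)| = |h_z̄(p)|`. -/
theorem not_immersion_iff_singular (Ω : Set ℂ) (hΩ : IsOpen Ω)
    (h : ℂ → ℂ) (w : ℂ → ℝ)
    (hh : ContDiffOn ℝ (⊤ : ℕ∞) h Ω) (hw : ContDiffOn ℝ (⊤ : ℕ∞) w Ω)
    (hharm_h : ∀ z ∈ Ω, wzbar (fun q => wz h q) z = 0)
    (hharm_w : ∀ z ∈ Ω, wzbar (fun q => rz w q) z = 0)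
    (hconf : ∀ z ∈ Ω, wz h z * (starRingEnd ℂ) (wzbar h z) - (rz w z) ^ 2 = 0)
    (hnd : ∃ z ∈ Ω, ‖wz h z‖ ≠ ‖wzbar h z‖)
    (hspacelike : ∀ z ∈ Ω,
      0 ≤ (px h z * (starRingEnd ℂ) (px h z)).re - (rx w z) ^ 2 ∧
      0 ≤ (py h z * (starRingEnd ℂ) (py h z)).re - (ry w z) ^ 2)
    (F : ℂ → ℂ × ℝ) (hF : ∀ z, F z = (h z, w z))
    (p : ℂ) (hp : p ∈ Ω) :
    ¬ Function.Injective (fderiv ℝ F p) ↔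
      ‖wz h p‖ = ‖wzbar h p‖ := by
  have hmem : Ω ∈ nhds p := hΩ.mem_nhds hp
  have hdh : DifferentiableAt ℝ h p := (hh.contDiffAt hmem).differentiableAt (by simp)
  have hdw : DifferentiableAt ℝ w p := (hw.contDiffAt hmem).differentiableAt (by simp)
  have hFeq : F = fun z => (h z, w z) := funext hF
  have hfd : fderiv ℝ F p = (fderiv ℝ h p).prod (fderiv ℝ w p) := by
    rw [hFeq]; exact hdh.fderiv_prodMk hdw
  have hL1 : fderiv ℝ F p 1 = ((px h p, rx w p) : ℂ × ℝ) := by rw [hfd]; rfl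
  have hLI : fderiv ℝ F p Complex.I = ((py h p, ry w p) : ℂ × ℝ) := by rw [hfd]; rfl
  rw [not_injective_iff_comb (fderiv ℝ F p), hL1, hLI]
  have hkey := key_alg (px h p) (py h p) (rx w p) (ry w p)
    (hconf p hp) (hspacelike p hp).1 (hspacelike p hp).2
  rw [show ‖wz h p‖ = ‖(px h p - I * py h p)/2‖ from rfl,
    show ‖wzbar h p‖ = ‖(px h p + I * py h p)/2‖ from rfl]
  rw [← hkey]
  have hpair : ∀ l m : ℝ, (l • ((px h p, rx w p) : ℂ × ℝ) + m • ((py h p, ry w p) : ℂ × ℝ)) =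
      ((l • px h p + m • py h p, l * rx w p + m * ry w p) : ℂ × ℝ) := fun l m => rfl
  constructor
  · rintro ⟨l, m, hnt, hsum⟩
    rw [hpair, Prod.ext_iff] at hsum
    exact ⟨l, m, hnt, hsum.1, hsum.2⟩
  · rintro ⟨l, m, hnt, hc, hst⟩
    refine ⟨l, m, hnt, ?_⟩
    rw [hpair, Prod.ext_iff]
    exact ⟨hc, hst⟩
end
end

section
/- Let h : Ω → ℂ be harmonic on a simply connected domain Ω with h_z · conj(h_z̄) admitting a holomorphic square root φ, and |h_z| not identically equal to |h_z̄|. Define w(z) = 2 Re ∫_{z₀}^z φ(ζ) dζ + w₀. Then F = (h, w) is a generalised maximal surface: w is harmonic and h_z · conj(h_z̄) − (w_z)² = 0. -/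
noncomputable section

open Complex

/-- If `w = 2 Re Φ + c` and `Φ` has complex derivative `φ z` at `z`, then `rz w z = φ z`. -/
lemma rz_two_re_eq (Φ φ : ℂ → ℂ) (w : ℂ → ℝ) (c : ℝ)
    (hwdef : ∀ z, w z = 2 * (Φ z).re + c) (z : ℂ) (hd : HasDerivAt Φ (φ z) z) :
    rz w z = φ z := by
  have hΦr : HasFDerivAt Φ
      (((ContinuousLinearMap.smulRight (1 : ℂ →L[ℂ] ℂ) (φ z)).restrictScalars ℝ)) z :=
    (hd.hasFDerivAt).restrictScalars ℝ
  have hre := (Complex.reCLM.hasFDerivAt).comp z hΦr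
  have hw : HasFDerivAt w
      ((2 : ℝ) • (Complex.reCLM.comp
        ((ContinuousLinearMap.smulRight (1 : ℂ →L[ℂ] ℂ) (φ z)).restrictScalars ℝ))) z := by
    have : w = fun q => 2 * (Φ q).re + c := funext hwdef
    rw [this]
    simpa [smul_eq_mul] using (hre.const_mul (2:ℝ)).add_const c
  have hf := hw.fderiv
  have h1 : rx w z = 2 * (φ z).re := by
    simp [rx, hf, smul_eq_mul]
  have h2 : ry w z = 2 * (Complex.I * φ z).re := by
    simp [ry, hf, smul_eq_mul]
  simp only [rz, h1, h2]
  apply Complex.ext <;> simp [Complex.mul_re, Complex.mul_im] <;> ring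

/-- The `z̄`-Wirtinger derivative of a complex differentiable function vanishes. -/
lemma wzbar_of_differentiableAt (φ : ℂ → ℂ) (z : ℂ) (hd : DifferentiableAt ℂ φ z) :
    wzbar φ z = 0 := by
  have hD : HasDerivAt φ (deriv φ z) z := hd.hasDerivAt
  have hF : HasFDerivAt φ
      (((ContinuousLinearMap.smulRight (1 : ℂ →L[ℂ] ℂ) (deriv φ z)).restrictScalars ℝ)) z :=
    hD.hasFDerivAt.restrictScalars ℝ
  have hf := hF.fderiv
  simp [wzbar, px, py, hf, smul_eq_mul]
  rw [show I * (I * deriv φ z) = I ^ 2 * deriv φ z by ring, Complex.I_sq]; ring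

/-- if `h` is harmonic on a simply connected domain, `φ` is a holomorphic
square root of `h_z ⬝ conj(h_z̄)`, `Φ` a holomorphic primitive of `φ` (so that
`w(z) = 2 Re Φ(z) + w₀ = 2 Re ∫_{z₀}^z φ + w₀`), and `|h_z|` is not identically
`|h_z̄|`, then `F = (h, w)` is a generalised maximal surface: `w` is harmonic and
`h_z ⬝ conj(h_z̄) - (w_z)² = 0` on `Ω`. -/
theorem bjorling_representation (Ω : Set ℂ) (hΩ : IsOpen Ω) (hΩconn : IsConnected Ω)
    (hΩsc : SimplyConnectedSpace Ω)
    (h : ℂ → ℂ) (hh : ContDiffOn ℝ (⊤ : ℕ∞) h Ω)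
    (hharm_h : ∀ z ∈ Ω, wzbar (fun q => wz h q) z = 0)
    (φ : ℂ → ℂ) (hφ : DifferentiableOn ℂ φ Ω)
    (hφsq : ∀ z ∈ Ω, φ z ^ 2 = wz h z * (starRingEnd ℂ) (wzbar h z))
    (hnd : ∃ z ∈ Ω, ‖wz h z‖ ≠ ‖wzbar h z‖)
    (Φ : ℂ → ℂ) (hΦ : ∀ z ∈ Ω, HasDerivAt Φ (φ z) z)
    (z₀ : ℂ) (hz₀ : z₀ ∈ Ω) (w₀ : ℝ)
    (w : ℂ → ℝ) (hwdef : ∀ z, w z = 2 * (Φ z).re - 2 * (Φ z₀).re + w₀) :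
    (∀ z ∈ Ω, wzbar (fun q => rz w q) z = 0) ∧
      (∀ z ∈ Ω, wz h z * (starRingEnd ℂ) (wzbar h z) - (rz w z) ^ 2 = 0) := by
  have hwdef' : ∀ z, w z = 2 * (Φ z).re + (w₀ - 2 * (Φ z₀).re) := by
    intro z; rw [hwdef]; ring
  have hrz : ∀ z ∈ Ω, rz w z = φ z := fun z hz =>
    rz_two_re_eq Φ φ w _ hwdef' z (hΦ z hz)
  constructor
  · intro z hz
    have heq : (fun q => rz w q) =ᶠ[nhds z] φ :=
      Filter.eventuallyEq_of_mem (hΩ.mem_nhds hz) (fun q hq => hrz q hq)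
    have hfd : fderiv ℝ (fun q => rz w q) z = fderiv ℝ φ z := heq.fderiv_eq
    have : wzbar (fun q => rz w q) z = wzbar φ z := by
      simp [wzbar, px, py, hfd]
    rw [this]
    exact wzbar_of_differentiableAt φ z ((hφ z hz).differentiableAt (hΩ.mem_nhds hz))
  · intro z hz
    rw [hrz z hz, ← hφsq z hz, sub_self]
end
end

section
/- Define h : ℂ → ℂ by h(z) = e^z + z̄ and w(z) = 2(e^{z/2} + e^{z̄/2}) (real-valued). Then h and w are harmonic, h_z · conj(h_z̄) − (w_z)² = 0 on ℂ, and |h_z| is not identically equal to |h_z̄| (equality holds exactly on the imaginary axis). Hence (h, w) defines a generalised maximal surface. -/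
noncomputable section

open Complex

lemma wz_wzbar_of_hasDerivAt {f : ℂ → ℂ} {c p : ℂ} (hf : HasDerivAt f c p) :
    wz f p = c ∧ wzbar f p = 0 := by
  have H := (hf.hasFDerivAt.restrictScalars ℝ).fderiv
  have h1 : px f p = c := by rw [px, H]; simp
  have h2 : py f p = Complex.I * c := by
    rw [py, H]; simp [mul_comm]
  constructor
  · rw [wz, h1, h2]; linear_combination (-c/2) * Complex.I_sq
  · rw [wzbar, h1, h2]; linear_combination (c/2) * Complex.I_sq

lemma hasDerivAt_exp_half (p : ℂ) :
    HasDerivAt (fun z : ℂ => Complex.exp (z / 2)) (Complex.exp (p / 2) / 2) p := by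
  have h2 : HasDerivAt (fun z : ℂ => z / 2) (1 / 2 : ℂ) p := by
    simpa using (hasDerivAt_id p).div_const 2
  simpa [mul_one_div, Function.comp_def, div_eq_mul_inv] using (Complex.hasDerivAt_exp (p / 2)).comp p h2

/-- `h(z) = e^z + z̄`, `w(z) = 2(e^{z/2} + e^{z̄/2})` are harmonic,
satisfy the conformality relation on `ℂ`, and `|h_z|` is not identically `|h_z̄|`
(equality holds exactly on the imaginary axis); hence `(h, w)` is a generalised
maximal surface. -/
theorem exp_example_maximal
    (h : ℂ → ℂ) (hhdef : ∀ z, h z = Complex.exp z + (starRingEnd ℂ) z)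
    (w : ℂ → ℝ)
    (hwdef : ∀ z, w z =
      (2 * (Complex.exp (z / 2) + Complex.exp ((starRingEnd ℂ) z / 2))).re) :
    (∀ z : ℂ, wzbar (fun q => wz h q) z = 0) ∧
    (∀ z : ℂ, wzbar (fun q => rz w q) z = 0) ∧
    (∀ z : ℂ, wz h z * (starRingEnd ℂ) (wzbar h z) - (rz w z) ^ 2 = 0) ∧
    (¬ ∀ z : ℂ, ‖wz h z‖ = ‖wzbar h z‖) ∧
    (∀ z : ℂ, ‖wz h z‖ = ‖wzbar h z‖ ↔ z.re = 0) := by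
  -- derivative of h
  have Hh : ∀ p : ℂ, HasFDerivAt h
      ((((1 : ℂ →L[ℂ] ℂ).smulRight (Complex.exp p)).restrictScalars ℝ)
        + (Complex.conjCLE : ℂ →L[ℝ] ℂ)) p := by
    intro p
    have hfun : h = fun z => Complex.exp z + (starRingEnd ℂ) z := funext hhdef
    rw [hfun]
    exact ((Complex.hasDerivAt_exp p).hasFDerivAt.restrictScalars ℝ).add
      Complex.conjCLE.hasFDerivAt
  have px_h : ∀ p, px h p = Complex.exp p + 1 := by
    intro p; rw [px, (Hh p).fderiv]; simp
  have py_h : ∀ p, py h p = Complex.I * Complex.exp p - Complex.I := by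
    intro p; rw [py, (Hh p).fderiv]
    simp [Complex.conjCLE_apply, mul_comm, sub_eq_add_neg]
  have wz_h : ∀ p, wz h p = Complex.exp p := by
    intro p; rw [wz, px_h, py_h]
    linear_combination ((1 - Complex.exp p) / 2) * Complex.I_sq
  have wzbar_h : ∀ p, wzbar h p = 1 := by
    intro p; rw [wzbar, px_h, py_h]
    linear_combination ((Complex.exp p - 1) / 2) * Complex.I_sq
  -- derivative of w
  have Hw : ∀ p : ℂ, HasFDerivAt w
      (Complex.reCLM.comp ((2 : ℂ) •
        ((((1 : ℂ →L[ℂ] ℂ).smulRight (Complex.exp (p / 2) / 2)).restrictScalars ℝ)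
          + ((((1 : ℂ →L[ℂ] ℂ).smulRight
              (Complex.exp ((starRingEnd ℂ) p / 2) / 2)).restrictScalars ℝ).comp
            (Complex.conjCLE : ℂ →L[ℝ] ℂ))))) p := by
    intro p
    have hfun : w = fun z =>
        Complex.reCLM (2 * (Complex.exp (z / 2) + Complex.exp ((starRingEnd ℂ) z / 2))) := by
      funext z; rw [hwdef z]; rfl
    rw [hfun]
    have hA := (hasDerivAt_exp_half p).hasFDerivAt.restrictScalars ℝ
    have hB := HasFDerivAt.comp p
      (((hasDerivAt_exp_half ((starRingEnd ℂ) p)).hasFDerivAt.restrictScalars ℝ))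
      Complex.conjCLE.hasFDerivAt
    exact Complex.reCLM.hasFDerivAt.comp p ((hA.add hB).const_mul 2)
  have rx_w : ∀ p, rx w p = 2 * (Complex.exp (p / 2)).re := by
    intro p; rw [rx, (Hw p).fderiv]
    have hb : Complex.exp ((starRingEnd ℂ) p / 2)
        = (starRingEnd ℂ) (Complex.exp (p / 2)) := by
      rw [← Complex.exp_conj, map_div₀, map_ofNat]
    simp [Complex.conjCLE_apply, hb, Complex.add_re, Complex.conj_re]
    ring
  have ry_w : ∀ p, ry w p = -(2 * (Complex.exp (p / 2)).im) := by
    intro p; rw [ry, (Hw p).fderiv]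
    have hb : Complex.exp ((starRingEnd ℂ) p / 2)
        = (starRingEnd ℂ) (Complex.exp (p / 2)) := by
      rw [← Complex.exp_conj, map_div₀, map_ofNat]
    simp [Complex.conjCLE_apply, hb, Complex.conj_I, Complex.mul_re]
    ring
  have rz_w : ∀ p, rz w p = Complex.exp (p / 2) := by
    intro p; rw [rz, rx_w, ry_w]
    apply Complex.ext <;> simp
  refine ⟨?_, ?_, ?_, ?_, ?_⟩
  · intro z
    have hfun : (fun q => wz h q) = Complex.exp := funext wz_h
    rw [hfun]
    exact (wz_wzbar_of_hasDerivAt (Complex.hasDerivAt_exp z)).2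
  · intro z
    have hfun : (fun q => rz w q) = fun q => Complex.exp (q / 2) := funext rz_w
    rw [hfun]
    exact (wz_wzbar_of_hasDerivAt (hasDerivAt_exp_half z)).2
  · intro z
    rw [wz_h, wzbar_h, rz_w, map_one, mul_one, sq, ← Complex.exp_add, add_halves,
      sub_self]
  · intro Hall
    have := Hall 1
    rw [wz_h, wzbar_h] at this
    simp [Complex.norm_exp, Real.exp_eq_one_iff] at this
  · intro z
    rw [wz_h, wzbar_h]
    simp [Complex.norm_exp, Real.exp_eq_one_iff]
end
end

section
/- For every real c > 0, c ≠ 1, the maps h(z) = (1/6)(z³ − 1/z̄³) + (1/2)(z̄ − 1/z) and w(z) = (1/4)(z² − 1/z̄² − 1/z² + z̄²) on ℂ∖{0} are harmonic, satisfy h_z·conj(h_z̄) = (w_z)², have |h_z| = |h_z̄| on |z| = 1 (so h(e^{iθ}) = 0, w(e^{iθ}) = 0 with special singularity there), and satisfy F(ce^{iθ}) = ((1/2)(c−1/c)e^{−iθ} + (1/6)(c³−1/c³)e^{3iθ}, (1/2)(c²−1/c²)cos 2θ). -/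
noncomputable section

open Complex

lemma wirtinger_decomp (f g : ℂ → ℂ) (p : ℂ)
    (hf : DifferentiableAt ℂ f p) (hg : DifferentiableAt ℂ g p) :
    wz (fun z => f z + (starRingEnd ℂ) (g z)) p = deriv f p ∧
    wzbar (fun z => f z + (starRingEnd ℂ) (g z)) p = (starRingEnd ℂ) (deriv g p) := by
  have hF : HasFDerivAt (fun z => f z + (starRingEnd ℂ) (g z))
      (((fderiv ℂ f p).restrictScalars ℝ) +
        ((Complex.conjCLE.toContinuousLinearMap).comp ((fderiv ℂ g p).restrictScalars ℝ))) p :=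
    ((hf.hasFDerivAt.restrictScalars ℝ).add
      ((Complex.conjCLE.toContinuousLinearMap.hasFDerivAt).comp p
        (hg.hasFDerivAt.restrictScalars ℝ)))
  have hfd := hF.fderiv
  have e1 : fderiv ℂ f p 1 = deriv f p := fderiv_apply_one_eq_deriv
  have e2 : fderiv ℂ g p 1 = deriv g p := fderiv_apply_one_eq_deriv
  have e3 : fderiv ℂ f p I = I * deriv f p := by
    have : fderiv ℂ f p (I • (1:ℂ)) = I • fderiv ℂ f p 1 := (fderiv ℂ f p).map_smul I 1
    simpa [e1, smul_eq_mul] using this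
  have e4 : fderiv ℂ g p I = I * deriv g p := by
    have : fderiv ℂ g p (I • (1:ℂ)) = I • fderiv ℂ g p 1 := (fderiv ℂ g p).map_smul I 1
    simpa [e2, smul_eq_mul] using this
  have hpx : px (fun z => f z + (starRingEnd ℂ) (g z)) p
      = deriv f p + (starRingEnd ℂ) (deriv g p) := by
    rw [px, hfd]
    simp [e1, e2]
  have hpy : py (fun z => f z + (starRingEnd ℂ) (g z)) p
      = I * deriv f p + (starRingEnd ℂ) (I * deriv g p) := by
    rw [py, hfd]
    simp [e3, e4]
  constructor
  · simp only [wz, hpx, hpy, map_mul, conj_I]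
    have h2 : (I : ℂ) * I = -1 := Complex.I_mul_I
    field_simp
    linear_combination (starRingEnd ℂ (deriv g p)) * h2 - deriv f p * h2
  · simp only [wzbar, hpx, hpy, map_mul, conj_I]
    have h2 : (I : ℂ) * I = -1 := Complex.I_mul_I
    field_simp
    linear_combination (deriv f p) * h2 - (starRingEnd ℂ (deriv g p)) * h2

lemma wz_of_holo (f : ℂ → ℂ) (p : ℂ) (hf : DifferentiableAt ℂ f p) :
    wz f p = deriv f p := by
  have := (wirtinger_decomp f (fun _ => (0:ℂ)) p hf (differentiableAt_const 0)).1
  simpa using this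

lemma wzbar_of_holo (f : ℂ → ℂ) (p : ℂ) (hf : DifferentiableAt ℂ f p) :
    wzbar f p = 0 := by
  have := (wirtinger_decomp f (fun _ => (0:ℂ)) p hf (differentiableAt_const 0)).2
  simpa using this

lemma wzbar_congr {f g : ℂ → ℂ} {p : ℂ} (hfg : f =ᶠ[nhds p] g) :
    wzbar f p = wzbar g p := by
  unfold wzbar px py
  rw [hfg.fderiv_eq]

lemma wz_congr {f g : ℂ → ℂ} {p : ℂ} (hfg : f =ᶠ[nhds p] g) :
    wz f p = wz g p := by
  unfold wz px py
  rw [hfg.fderiv_eq]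

lemma rz_re (G : ℂ → ℂ) (p : ℂ) (hG : DifferentiableAt ℂ G p) :
    rz (fun z => (G z).re) p = deriv G p / 2 := by
  have hF : HasFDerivAt (fun z => (G z).re)
      (Complex.reCLM.comp ((fderiv ℂ G p).restrictScalars ℝ)) p :=
    (Complex.reCLM.hasFDerivAt).comp p (hG.hasFDerivAt.restrictScalars ℝ)
  have hfd := hF.fderiv
  have e1 : fderiv ℂ G p 1 = deriv G p := fderiv_apply_one_eq_deriv
  have e3 : fderiv ℂ G p I = I * deriv G p := by
    have : fderiv ℂ G p (I • (1:ℂ)) = I • fderiv ℂ G p 1 := (fderiv ℂ G p).map_smul I 1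
    simp [e1, smul_eq_mul] at this
    simpa using this
  have hrx : rx (fun z => (G z).re) p = (deriv G p).re := by
    rw [rx, hfd]; simp [e1]
  have hry : ry (fun z => (G z).re) p = (I * deriv G p).re := by
    rw [ry, hfd]; simp [e3]
  rw [rz, hrx, hry]
  have : (I * deriv G p).re = -(deriv G p).im := by simp
  rw [this]
  rw [Complex.ext_iff]
  constructor <;> simp <;> ring

lemma hasDerivAt_f1 (p : ℂ) (hp : p ≠ 0) :
    HasDerivAt (fun z : ℂ => z ^ 3 / 6 - (2 * z)⁻¹) (p ^ 2 / 2 + (2 * p ^ 2)⁻¹) p := by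
  have h1 : HasDerivAt (fun z : ℂ => z ^ 3 / 6) (3 * p ^ 2 / 6) p :=
    (hasDerivAt_pow 3 p).div_const 6
  have h2 : HasDerivAt (fun z : ℂ => (2 * z)⁻¹) (-2 / (2 * p) ^ 2) p := by
    have := ((hasDerivAt_id p).const_mul (2:ℂ)).inv (by simpa using hp)
    exact this.congr_deriv (by simp)
  have := h1.sub h2
  refine this.congr_deriv ?_
  field_simp
  ring

lemma hasDerivAt_g1 (p : ℂ) (hp : p ≠ 0) :
    HasDerivAt (fun z : ℂ => -(z ^ 3)⁻¹ / 6 + z / 2) ((2 * p ^ 4)⁻¹ + 1 / 2) p := by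
  have h1 : HasDerivAt (fun z : ℂ => (z ^ 3)⁻¹) (-(3 * p ^ 2) / (p ^ 3) ^ 2) p := by
    have := (hasDerivAt_pow 3 p).inv (pow_ne_zero 3 hp)
    exact this.congr_deriv (by simp)
  have h2 : HasDerivAt (fun z : ℂ => z / 2) (1 / 2 : ℂ) p := by
    simpa using (hasDerivAt_id p).div_const 2
  have := ((h1.neg).div_const 6).add h2
  refine this.congr_deriv ?_
  field_simp
  ring

lemma hasDerivAt_G (p : ℂ) (hp : p ≠ 0) :
    HasDerivAt (fun z : ℂ => (z ^ 2 - (z ^ 2)⁻¹) / 2) (p + (p ^ 3)⁻¹) p := by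
  have h1 : HasDerivAt (fun z : ℂ => (z ^ 2)⁻¹) (-(2 * p) / (p ^ 2) ^ 2) p := by
    have := (hasDerivAt_pow 2 p).inv (pow_ne_zero 2 hp)
    exact this.congr_deriv (by simp)
  have := ((hasDerivAt_pow 2 p).sub h1).div_const 2
  refine this.congr_deriv ?_
  field_simp
  ring

lemma re_eq_of (u : ℂ) (r : ℝ) (hur : u + (starRingEnd ℂ) u = 2 * (r : ℂ)) : u.re = r := by
  have h1 : ((u.re : ℝ) : ℂ) = (r : ℂ) := by
    have := Complex.add_conj u
    rw [hur] at this
    field_simp at this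
    exact mul_left_cancel₀ two_ne_zero (by exact_mod_cast this.symm)
  exact_mod_cast h1

section Main

variable (h : ℂ → ℂ)
    (hhdef : ∀ z, h z = (z ^ 3 - 1 / (starRingEnd ℂ) z ^ 3) / 6
      + ((starRingEnd ℂ) z - 1 / z) / 2)
    (w : ℂ → ℝ)
    (hwdef : ∀ z, w z =
      ((z ^ 2 - 1 / (starRingEnd ℂ) z ^ 2 - 1 / z ^ 2 + (starRingEnd ℂ) z ^ 2) / 4).re)

include hhdef in
lemma h_decomp : h = fun z => (z ^ 3 / 6 - (2 * z)⁻¹)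
    + (starRingEnd ℂ) (-(z ^ 3)⁻¹ / 6 + z / 2) := by
  funext z
  rw [hhdef]
  by_cases hz : z = 0
  · simp [hz]
  · have hcz : (starRingEnd ℂ) z ≠ 0 := by simpa using hz
    simp only [map_add, map_div₀, map_neg, map_inv₀, map_pow, map_ofNat, Complex.conj_conj]
    field_simp [hz, hcz]
    ring

include hhdef in
lemma wz_h_eq (z : ℂ) (hz : z ≠ 0) : wz h z = z ^ 2 / 2 + (2 * z ^ 2)⁻¹ := by
  rw [h_decomp h hhdef]
  rw [(wirtinger_decomp _ _ z (hasDerivAt_f1 z hz).differentiableAt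
    (hasDerivAt_g1 z hz).differentiableAt).1]
  rw [(hasDerivAt_f1 z hz).deriv]

include hhdef in
lemma wzbar_h_eq (z : ℂ) (hz : z ≠ 0) :
    wzbar h z = (starRingEnd ℂ) ((2 * z ^ 4)⁻¹ + 1 / 2) := by
  rw [h_decomp h hhdef]
  rw [(wirtinger_decomp _ _ z (hasDerivAt_f1 z hz).differentiableAt
    (hasDerivAt_g1 z hz).differentiableAt).2]
  rw [(hasDerivAt_g1 z hz).deriv]

lemma re_eq_re (u v : ℂ) (huv : u + (starRingEnd ℂ) u = v + (starRingEnd ℂ) v) :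
    u.re = v.re := by
  have h1 := Complex.add_conj u
  have h2 := Complex.add_conj v
  rw [h1, h2] at huv
  have : ((u.re : ℝ) : ℂ) = ((v.re : ℝ) : ℂ) := by
    field_simp at huv
    exact mul_left_cancel₀ two_ne_zero (by exact_mod_cast huv)
  exact_mod_cast this

include hwdef in
lemma w_decomp : w = fun z => (((z ^ 2 - (z ^ 2)⁻¹) / 2)).re := by
  funext z
  rw [hwdef]
  by_cases hz : z = 0
  · simp [hz]
  · have hcz : (starRingEnd ℂ) z ≠ 0 := by simpa using hz
    apply re_eq_re
    simp only [map_add, map_sub, map_div₀, map_one, map_inv₀, map_pow, map_ofNat,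
      Complex.conj_conj]
    field_simp [hz, hcz]
    ring

include hwdef in
lemma rz_w_eq (z : ℂ) (hz : z ≠ 0) : rz w z = (z + (z ^ 3)⁻¹) / 2 := by
  rw [w_decomp w hwdef]
  rw [rz_re _ z (hasDerivAt_G z hz).differentiableAt, (hasDerivAt_G z hz).deriv]

include hhdef in
lemma harm1 (z : ℂ) (hz : z ≠ 0) : wzbar (fun q => wz h q) z = 0 := by
  have hmem : {q : ℂ | q ≠ 0} ∈ nhds z := compl_singleton_mem_nhds hz
  have hEq : (fun q => wz h q) =ᶠ[nhds z] (fun q => q ^ 2 / 2 + (2 * q ^ 2)⁻¹) :=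
    Filter.eventuallyEq_of_mem hmem (fun q hq => wz_h_eq h hhdef q hq)
  rw [wzbar_congr hEq]
  apply wzbar_of_holo
  have h1 : DifferentiableAt ℂ (fun q : ℂ => q ^ 2 / 2) z :=
    (differentiableAt_pow 2).div_const 2
  have h2 : DifferentiableAt ℂ (fun q : ℂ => (2 * q ^ 2)⁻¹) z := by
    apply DifferentiableAt.inv
    · exact (differentiableAt_pow 2).const_mul 2
    · simp [hz]
  exact h1.add h2

include hwdef in
lemma harm2 (z : ℂ) (hz : z ≠ 0) : wzbar (fun q => rz w q) z = 0 := by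
  have hmem : {q : ℂ | q ≠ 0} ∈ nhds z := compl_singleton_mem_nhds hz
  have hEq : (fun q => rz w q) =ᶠ[nhds z] (fun q => (q + (q ^ 3)⁻¹) / 2) :=
    Filter.eventuallyEq_of_mem hmem (fun q hq => rz_w_eq w hwdef q hq)
  rw [wzbar_congr hEq]
  apply wzbar_of_holo
  have h2 : DifferentiableAt ℂ (fun q : ℂ => (q ^ 3)⁻¹) z := by
    apply DifferentiableAt.inv (differentiableAt_pow 3)
    simp [hz]
  exact (differentiableAt_id.add h2).div_const 2

include hhdef hwdef in
lemma conformality (z : ℂ) (hz : z ≠ 0) :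
    wz h z * (starRingEnd ℂ) (wzbar h z) = (rz w z) ^ 2 := by
  rw [wz_h_eq h hhdef z hz, wzbar_h_eq h hhdef z hz, rz_w_eq w hwdef z hz,
    Complex.conj_conj]
  field_simp [hz]
  ring

lemma conj_exp_theta (θ : ℝ) :
    (starRingEnd ℂ) (Complex.exp ((θ : ℂ) * Complex.I)) = (Complex.exp ((θ : ℂ) * Complex.I))⁻¹ := by
  rw [← Complex.exp_conj, ← Complex.exp_neg]
  congr 1
  simp [Complex.conj_ofReal]

include hhdef in
lemma circle_abs (θ : ℝ) :
    ‖wz h (Complex.exp ((θ : ℂ) * Complex.I))‖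
      = ‖wzbar h (Complex.exp ((θ : ℂ) * Complex.I))‖ := by
  set e := Complex.exp ((θ : ℂ) * Complex.I) with he
  have he0 : e ≠ 0 := Complex.exp_ne_zero _
  have hce : (starRingEnd ℂ) e = e⁻¹ := conj_exp_theta θ
  have key : wzbar h e = e ^ 2 * (starRingEnd ℂ) (wz h e) := by
    rw [wz_h_eq h hhdef e he0, wzbar_h_eq h hhdef e he0]
    simp only [map_add, map_div₀, map_inv₀, map_mul, map_pow, map_one, map_ofNat, hce]
    field_simp
    ring
  rw [key, norm_mul, norm_pow, Complex.norm_conj, he, Complex.norm_exp_ofReal_mul_I]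
  simp

include hhdef in
lemma circle_h (θ : ℝ) : h (Complex.exp ((θ : ℂ) * Complex.I)) = 0 := by
  set e := Complex.exp ((θ : ℂ) * Complex.I) with he
  have he0 : e ≠ 0 := Complex.exp_ne_zero _
  have hce : (starRingEnd ℂ) e = e⁻¹ := conj_exp_theta θ
  rw [hhdef, hce]
  field_simp
  ring

include hwdef in
lemma circle_w (θ : ℝ) : w (Complex.exp ((θ : ℂ) * Complex.I)) = 0 := by
  set e := Complex.exp ((θ : ℂ) * Complex.I) with he
  have he0 : e ≠ 0 := Complex.exp_ne_zero _
  have hce : (starRingEnd ℂ) e = e⁻¹ := conj_exp_theta θ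
  rw [w_decomp w hwdef]
  have : ((e ^ 2 - (e ^ 2)⁻¹) / 2).re = (0 : ℝ) := by
    apply re_eq_of
    simp only [map_div₀, map_sub, map_inv₀, map_pow, map_ofNat, hce]
    field_simp
    push_cast
    ring
  simpa using this

include hhdef in
lemma radius_h (c : ℝ) (hc : 0 < c) (θ : ℝ) :
    h ((c : ℂ) * Complex.exp ((θ : ℂ) * Complex.I))
        = ((1 / 2 * (c - 1 / c) : ℝ) : ℂ) * Complex.exp (-(θ : ℂ) * Complex.I)
          + ((1 / 6 * (c ^ 3 - 1 / c ^ 3) : ℝ) : ℂ) *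
            Complex.exp (3 * (θ : ℂ) * Complex.I) := by
  set e := Complex.exp ((θ : ℂ) * Complex.I) with he
  have he0 : e ≠ 0 := Complex.exp_ne_zero _
  have hce : (starRingEnd ℂ) e = e⁻¹ := conj_exp_theta θ
  have hc0 : (c : ℂ) ≠ 0 := by exact_mod_cast hc.ne'
  have hneg : Complex.exp (-(θ : ℂ) * Complex.I) = e⁻¹ := by
    rw [neg_mul, Complex.exp_neg]
  have h3 : Complex.exp (3 * (θ : ℂ) * Complex.I) = e ^ 3 := by
    have : (3 : ℂ) * (θ : ℂ) * Complex.I = (θ : ℂ) * Complex.I + ((θ : ℂ) * Complex.I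
        + (θ : ℂ) * Complex.I) := by ring
    rw [this, Complex.exp_add, Complex.exp_add]
    ring
  rw [hhdef, hneg, h3]
  simp only [map_mul, Complex.conj_ofReal, hce]
  push_cast
  field_simp
  ring

include hwdef in
lemma radius_w (c : ℝ) (hc : 0 < c) (θ : ℝ) :
    w ((c : ℂ) * Complex.exp ((θ : ℂ) * Complex.I))
        = 1 / 2 * (c ^ 2 - 1 / c ^ 2) * Real.cos (2 * θ) := by
  set e := Complex.exp ((θ : ℂ) * Complex.I) with he
  have he0 : e ≠ 0 := Complex.exp_ne_zero _
  have hce : (starRingEnd ℂ) e = e⁻¹ := conj_exp_theta θ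
  have hc0 : (c : ℂ) ≠ 0 := by exact_mod_cast hc.ne'
  rw [w_decomp w hwdef]
  apply re_eq_of
  have hcos : Complex.cos (2 * (θ : ℂ)) = (e ^ 2 + (e ^ 2)⁻¹) / 2 := by
    have h2c := Complex.two_cos (2 * (θ : ℂ))
    have he2 : Complex.exp ((2 * (θ : ℂ)) * Complex.I) = e ^ 2 := by
      have : (2 : ℂ) * (θ : ℂ) * Complex.I = (θ : ℂ) * Complex.I + (θ : ℂ) * Complex.I := by
        ring
      rw [this, Complex.exp_add]
      ring
    have hne2 : Complex.exp ((-(2 * (θ : ℂ))) * Complex.I) = (e ^ 2)⁻¹ := by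
      rw [neg_mul, Complex.exp_neg, he2]
    rw [eq_div_iff (two_ne_zero)]
    rw [mul_comm] at h2c
    rw [h2c, he2, hne2]
  simp only [map_div₀, map_sub, map_inv₀, map_mul, map_pow, Complex.conj_ofReal,
    map_ofNat, hce]
  push_cast
  rw [hcos]
  field_simp
  have hec : e * e⁻¹ = 1 := mul_inv_cancel₀ he0
  have hcc : (c : ℂ) * (c : ℂ)⁻¹ = 1 := mul_inv_cancel₀ hc0
  ring

end Main

/-- the maps `h(z) = (1/6)(z³ − 1/z̄³) + (1/2)(z̄ − 1/z)` and
`w(z) = (1/4)(z² − 1/z̄² − 1/z² + z̄²)` on `ℂ∖{0}` are harmonic, satisfy the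
conformality relation, have `|h_z| = |h_z̄|` and `F = 0` on the unit circle
(special singularity), and for every `c > 0`, `c ≠ 1`,
`F(ce^{iθ}) = ((1/2)(c−1/c)e^{−iθ} + (1/6)(c³−1/c³)e^{3iθ}, (1/2)(c²−1/c²)cos 2θ)`. -/
theorem interpolation_example
    (h : ℂ → ℂ)
    (hhdef : ∀ z, h z = (z ^ 3 - 1 / (starRingEnd ℂ) z ^ 3) / 6
      + ((starRingEnd ℂ) z - 1 / z) / 2)
    (w : ℂ → ℝ)
    (hwdef : ∀ z, w z =
      ((z ^ 2 - 1 / (starRingEnd ℂ) z ^ 2 - 1 / z ^ 2 + (starRingEnd ℂ) z ^ 2) / 4).re) :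
    (∀ z : ℂ, z ≠ 0 → wzbar (fun q => wz h q) z = 0) ∧
    (∀ z : ℂ, z ≠ 0 → wzbar (fun q => rz w q) z = 0) ∧
    (∀ z : ℂ, z ≠ 0 →
      wz h z * (starRingEnd ℂ) (wzbar h z) = (rz w z) ^ 2) ∧
    (∀ θ : ℝ,
      ‖wz h (Complex.exp ((θ : ℂ) * Complex.I))‖
          = ‖wzbar h (Complex.exp ((θ : ℂ) * Complex.I))‖ ∧
      h (Complex.exp ((θ : ℂ) * Complex.I)) = 0 ∧
      w (Complex.exp ((θ : ℂ) * Complex.I)) = 0) ∧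
    (∀ c : ℝ, 0 < c → c ≠ 1 → ∀ θ : ℝ,
      h ((c : ℂ) * Complex.exp ((θ : ℂ) * Complex.I))
          = ((1 / 2 * (c - 1 / c) : ℝ) : ℂ) * Complex.exp (-(θ : ℂ) * Complex.I)
            + ((1 / 6 * (c ^ 3 - 1 / c ^ 3) : ℝ) : ℂ) *
              Complex.exp (3 * (θ : ℂ) * Complex.I) ∧
      w ((c : ℂ) * Complex.exp ((θ : ℂ) * Complex.I))
          = 1 / 2 * (c ^ 2 - 1 / c ^ 2) * Real.cos (2 * θ)) := by
  exact ⟨fun z hz => harm1 h hhdef z hz,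
    fun z hz => harm2 w hwdef z hz,
    fun z hz => conformality h hhdef w hwdef z hz,
    fun θ => ⟨circle_abs h hhdef θ, circle_h h hhdef θ, circle_w w hwdef θ⟩,
    fun c hc _ θ => ⟨radius_h h hhdef c hc θ, radius_w w hwdef c hc θ⟩⟩
end
end
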